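/- arXiv:1603.00430 — 2 statements merged into one kernel-verified Lean document; each statement's English description precedes it below -/
import Mathlib

section
/- Let Lφ = a φ'' + q φ' + c φ with a, q, c : ℝ → ℝ continuous and bounded and inf_ℝ a > 0. Assume there exist λ ∈ ℝ, R ∈ {−∞} ∪ ℝ and φ ∈ A_R such that Lφ = λφ on (R,∞). Then λ = λ̲₁(L,(R,∞)) = λ̄₁(L,(R,∞)). -/
open Real Filter Set

/-- The second order elliptic operator `L φ = a φ'' + q φ' + c φ`. -/
noncomputable def Lop (a q c φ : ℝ → ℝ) (x : ℝ) : ℝ :=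
  a x * deriv (deriv φ) x + q x * deriv φ x + c x * φ x

/-- The set `A_R` of admissible test functions on `(R,∞)`:
`C¹` on `[R,∞)`, `C²` on `(R,∞)`, positive on `[R,∞)`, with `φ'/φ` bounded on `(R,∞)`
and `(1/x) log φ(x) → 0` as `x → +∞`. -/
def AdmissibleOn (R : ℝ) (φ : ℝ → ℝ) : Prop :=
  ContDiffOn ℝ 1 φ (Set.Ici R) ∧ ContDiffOn ℝ 2 φ (Set.Ioi R) ∧
  (∀ x ∈ Set.Ici R, 0 < φ x) ∧
  (∃ M, ∀ x ∈ Set.Ioi R, |deriv φ x / φ x| ≤ M) ∧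
  Filter.Tendsto (fun x => Real.log (φ x) / x) Filter.atTop (nhds 0)

/-- The set `A_{-∞}` of admissible test functions on `ℝ`:
`C²` on `ℝ`, positive, with `φ'/φ` bounded and `(1/x) log φ(x) → 0` as `|x| → +∞`. -/
def AdmissibleAll (φ : ℝ → ℝ) : Prop :=
  ContDiff ℝ 2 φ ∧ (∀ x, 0 < φ x) ∧
  (∃ M, ∀ x, |deriv φ x / φ x| ≤ M) ∧
  Filter.Tendsto (fun x => Real.log (φ x) / x) Filter.atTop (nhds 0) ∧
  Filter.Tendsto (fun x => Real.log (φ x) / x) Filter.atBot (nhds 0)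

/-- The generalized principal eigenvalue `λ̲₁(L,(R,∞))`. -/
noncomputable def lamLower (a q c : ℝ → ℝ) (R : ℝ) : ℝ :=
  sSup {lam : ℝ | ∃ φ, AdmissibleOn R φ ∧ ∀ x ∈ Set.Ioi R, lam * φ x ≤ Lop a q c φ x}

/-- The generalized principal eigenvalue `λ̄₁(L,(R,∞))`. -/
noncomputable def lamUpper (a q c : ℝ → ℝ) (R : ℝ) : ℝ :=
  sInf {lam : ℝ | ∃ φ, AdmissibleOn R φ ∧ ∀ x ∈ Set.Ioi R, Lop a q c φ x ≤ lam * φ x}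

/-- The generalized principal eigenvalue `λ̲₁(L,ℝ)`. -/
noncomputable def lamLowerAll (a q c : ℝ → ℝ) : ℝ :=
  sSup {lam : ℝ | ∃ φ, AdmissibleAll φ ∧ ∀ x : ℝ, lam * φ x ≤ Lop a q c φ x}

/-- The generalized principal eigenvalue `λ̄₁(L,ℝ)`. -/
noncomputable def lamUpperAll (a q c : ℝ → ℝ) : ℝ :=
  sInf {lam : ℝ | ∃ φ, AdmissibleAll φ ∧ ∀ x : ℝ, Lop a q c φ x ≤ lam * φ x}

/-!
If `ψ, φ ∈ A_R` satisfy `Lψ ≥ μψ` and `Lφ ≤ λφ` with `μ > λ`, put `v = log ψ - log φ` and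
`s = v' = ψ'/ψ - φ'/φ`. Dividing the two inequalities by `ψ` and `φ` gives the Riccati-type
inequality `a s' + (a (ψ'/ψ + φ'/φ) + q) s ≥ μ - λ`, whose coefficient of `s` is bounded. Hence
`s' ≥ c₀ > 0` wherever `|s| < δ`, so `s` can only cross the band `(-δ, δ)` upwards, and it cannot
stay inside it. Therefore `s` is eventually bounded away from `0` with a fixed sign, and `v`
grows linearly, contradicting `v(x)/x → 0`. So every subsolution level is at most every
supersolution level, and an exact eigenfunction realises both extremes.
-/

open scoped Topology

lemma linear_le_of_le_deriv {v s : ℝ → ℝ} {x₁ κ : ℝ}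
    (hv : ∀ x ∈ Ici x₁, HasDerivAt v (s x) x) (hs : ∀ x ∈ Ici x₁, κ ≤ s x) :
    ∀ x ∈ Ici x₁, v x₁ + κ * (x - x₁) ≤ v x := by
  intro x hx
  have hsub : Icc x₁ x ⊆ Ici x₁ := Icc_subset_Ici_self
  have hline : ∀ y, HasDerivAt (fun y => v x₁ + κ * (y - x₁)) κ y := fun y => by
    simpa using ((hasDerivAt_id y).sub_const x₁).const_mul κ |>.const_add (v x₁)
  exact image_le_of_deriv_right_le_deriv_boundary (by fun_prop)
    (fun y _ => (hline y).hasDerivWithinAt) (by simp)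
    (fun y hy => (hv y (hsub hy)).continuousAt.continuousWithinAt)
    (fun y hy => (hv y (hsub (Ico_subset_Icc_self hy))).hasDerivWithinAt)
    (fun y hy => hs y (hsub (Ico_subset_Icc_self hy))) ⟨hx, le_rfl⟩

lemma not_tendsto_div_of_pos_le_deriv {v s : ℝ → ℝ} {x₁ κ : ℝ} (hκ : 0 < κ)
    (hv : ∀ x ∈ Ici x₁, HasDerivAt v (s x) x) (hs : ∀ x ∈ Ici x₁, κ ≤ s x) :
    ¬Tendsto (fun x => v x / x) atTop (𝓝 0) := by
  intro hlim
  have hline : Tendsto (fun x : ℝ => (v x₁ - κ * x₁) * x⁻¹ + κ) atTop (𝓝 κ) := by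
    simpa using (tendsto_inv_atTop_zero.const_mul (v x₁ - κ * x₁)).add_const κ
  have hle : (fun x : ℝ => (v x₁ - κ * x₁) * x⁻¹ + κ) ≤ᶠ[atTop] fun x => v x / x := by
    filter_upwards [eventually_ge_atTop x₁, eventually_gt_atTop 0] with x hx₁ hx
    rw [le_div_iff₀ hx]
    have := linear_le_of_le_deriv hv hs x hx₁
    field_simp
    linarith
  exact hκ.not_ge (le_of_tendsto_of_tendsto hline hlim hle)

lemma le_of_deriv_pos_at_level {s ds : ℝ → ℝ} {x₁ θ : ℝ}
    (hs : ∀ x ∈ Ici x₁, HasDerivAt s (ds x) x) (hθ : ∀ x ∈ Ici x₁, s x = θ → 0 < ds x)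
    (h₁ : θ ≤ s x₁) : ∀ x ∈ Ici x₁, θ ≤ s x := by
  intro x hx
  have hsub : Icc x₁ x ⊆ Ici x₁ := Icc_subset_Ici_self
  have key := image_le_of_deriv_right_lt_deriv_boundary (f := fun y => -s y) (f' := fun y => -ds y)
    (B := fun _ => -θ) (B' := fun _ => 0)
    (fun y hy => (hs y (hsub hy)).continuousAt.continuousWithinAt.neg)
    (fun y hy => (hs y (hsub (Ico_subset_Icc_self hy))).neg.hasDerivWithinAt)
    (neg_le_neg h₁) (fun _ => hasDerivAt_const _ _)
    (fun y hy hy' => neg_neg_of_pos (hθ y (hsub (Ico_subset_Icc_self hy)) (neg_inj.mp hy')))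
    ⟨hx, le_rfl⟩
  exact neg_le_neg_iff.mp key

theorem not_tendsto_div_of_deriv_ge_where_abs_lt {R δ c₀ : ℝ} (hδ : 0 < δ) (hc₀ : 0 < c₀)
    {v s ds : ℝ → ℝ} (hv : ∀ x ∈ Ioi R, HasDerivAt v (s x) x)
    (hs : ∀ x ∈ Ioi R, HasDerivAt s (ds x) x) (hds : ∀ x ∈ Ioi R, |s x| < δ → c₀ ≤ ds x) :
    ¬Tendsto (fun x => v x / x) atTop (𝓝 0) := by
  have hIci : ∀ {x₁}, x₁ ∈ Ioi R → Ici x₁ ⊆ Ioi R := fun h₁ => Ici_subset_Ioi.mpr h₁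
  have stays_above : ∀ x₁ ∈ Ioi R, ∀ θ, |θ| < δ → θ ≤ s x₁ → ∀ x ∈ Ici x₁, θ ≤ s x :=
    fun x₁ h₁ θ hθ => le_of_deriv_pos_at_level (fun x hx => hs x (hIci h₁ hx))
      (fun x hx hsx => hc₀.trans_le (hds x (hIci h₁ hx) (hsx ▸ hθ)))
  by_cases hup : ∃ x₁ ∈ Ioi R, δ / 2 ≤ s x₁
  · obtain ⟨x₁, h₁, hsx₁⟩ := hup
    have hθ : |δ / 2| < δ := by rw [abs_of_pos (half_pos hδ)]; exact half_lt_self hδ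
    exact not_tendsto_div_of_pos_le_deriv (half_pos hδ) (fun x hx => hv x (hIci h₁ hx))
      (stays_above x₁ h₁ _ hθ hsx₁)
  push Not at hup
  by_cases hmid : ∃ x₁ ∈ Ioi R, -δ < s x₁
  · exfalso
    obtain ⟨x₁, h₁, hsx₁⟩ := hmid
    -- `s` is trapped in `[s x₁, δ/2)`, where it grows at rate at least `c₀`
    have hband : ∀ x ∈ Ici x₁, |s x| < δ := fun x hx => abs_lt.mpr
      ⟨hsx₁.trans_le (stays_above x₁ h₁ _ (abs_lt.mpr ⟨hsx₁, by linarith [hup x₁ h₁]⟩) le_rfl x hx),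
        by linarith [hup x (hIci h₁ hx)]⟩
    have hgrow := linear_le_of_le_deriv (fun x hx => hs x (hIci h₁ hx))
      (fun x hx => hds x (hIci h₁ hx) (hband x hx))
    set x₂ := x₁ + 2 * δ / c₀
    have hx₂ : x₂ ∈ Ici x₁ := le_add_of_nonneg_right (by positivity : (0 : ℝ) ≤ 2 * δ / c₀)
    have hrise : c₀ * (x₂ - x₁) = 2 * δ := by simp only [x₂]; field_simp; ring
    linarith [hgrow x₂ hx₂, hup x₂ (hIci h₁ hx₂)]
  push Not at hmid
  have h₁ : R + 1 ∈ Ioi R := by simp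
  intro hlim
  refine not_tendsto_div_of_pos_le_deriv (v := fun x => -v x) hδ
    (fun x hx => (hv x (hIci h₁ hx)).neg) (fun x hx => ?_) (by simpa [neg_div] using hlim.neg)
  linarith [hmid x (hIci h₁ hx)]

lemma div_le_of_le_mul_add_mul_of_abs_lt {α β σ σ' ε A B : ℝ} (hα : 0 < α) (hαA : α ≤ A)
    (hβ : |β| ≤ B) (h : ε ≤ α * σ' + β * σ) (hσ : |σ| < ε / (2 * B)) :
    ε / (2 * A) ≤ σ' := by
  have hB : 0 < B := ((abs_nonneg β).trans hβ).lt_of_ne' fun hB => by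
    rw [hB, mul_zero, div_zero] at hσ
    exact (abs_nonneg σ).not_gt hσ
  have hε : 0 < ε := by
    have := (abs_nonneg σ).trans_lt hσ
    rwa [div_pos_iff_of_pos_right (by positivity)] at this
  have hβσ : β * σ ≤ ε / 2 := calc
    β * σ ≤ |β| * |σ| := (le_abs_self _).trans (abs_mul β σ).le
    _ ≤ B * (ε / (2 * B)) := mul_le_mul hβ hσ.le (abs_nonneg σ) hB.le
    _ = ε / 2 := by field_simp
  calc ε / (2 * A) ≤ ε / (2 * α) := div_le_div_of_nonneg_left hε.le (by positivity) (by linarith)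
    _ ≤ σ' := by rw [div_le_iff₀ (by positivity)]; linarith

theorem Lop_div_eq {a q c φ : ℝ → ℝ} {x : ℝ} (hφ : DifferentiableAt ℝ φ x)
    (hφ' : DifferentiableAt ℝ (deriv φ) x) (hx : φ x ≠ 0) :
    Lop a q c φ x / φ x =
      a x * (deriv (logDeriv φ) x + logDeriv φ x ^ 2) + q x * logDeriv φ x + c x := by
  have hderiv : deriv (logDeriv φ) x =
      (deriv (deriv φ) x * φ x - deriv φ x * deriv φ x) / φ x ^ 2 := deriv_div hφ' hφ hx
  rw [hderiv, logDeriv_apply, Lop]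
  field_simp
  ring

namespace AdmissibleOn

variable {R : ℝ} {φ : ℝ → ℝ}

lemma pos (hφ : AdmissibleOn R φ) {x : ℝ} (hx : x ∈ Ioi R) : 0 < φ x :=
  hφ.2.2.1 x (Ioi_subset_Ici_self hx)

lemma differentiableAt (hφ : AdmissibleOn R φ) {x : ℝ} (hx : x ∈ Ioi R) :
    DifferentiableAt ℝ φ x :=
  (hφ.2.1.contDiffAt (isOpen_Ioi.mem_nhds hx)).differentiableAt (by norm_num)

lemma differentiableAt_deriv (hφ : AdmissibleOn R φ) {x : ℝ} (hx : x ∈ Ioi R) :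
    DifferentiableAt ℝ (deriv φ) x :=
  ((hφ.2.1.deriv_of_isOpen isOpen_Ioi (by norm_num : (1 : WithTop ℕ∞) + 1 ≤ 2)).contDiffAt
    (isOpen_Ioi.mem_nhds hx)).differentiableAt (by norm_num)

lemma hasDerivAt_log (hφ : AdmissibleOn R φ) {x : ℝ} (hx : x ∈ Ioi R) :
    HasDerivAt (fun y => log (φ y)) (logDeriv φ x) x :=
  (hφ.differentiableAt hx).hasDerivAt.log (hφ.pos hx).ne'

lemma hasDerivAt_logDeriv (hφ : AdmissibleOn R φ) {x : ℝ} (hx : x ∈ Ioi R) :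
    HasDerivAt (logDeriv φ) (deriv (logDeriv φ) x) x :=
  ((hφ.differentiableAt_deriv hx).div (hφ.differentiableAt hx) (hφ.pos hx).ne').hasDerivAt

end AdmissibleOn

lemma AdmissibleAll.admissibleOn {φ : ℝ → ℝ} (hφ : AdmissibleAll φ) (R : ℝ) :
    AdmissibleOn R φ :=
  ⟨hφ.1.contDiffOn.of_le (by norm_num), hφ.1.contDiffOn, fun x _ => hφ.2.1 x,
    hφ.2.2.1.imp fun _ hM x _ => hM x, hφ.2.2.2.1⟩

theorem le_of_subsolution_of_supersolution {a q c ψ φ : ℝ → ℝ} {R μ lam : ℝ}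
    (ha_bdd : ∃ M, ∀ x, |a x| ≤ M) (hq_bdd : ∃ M, ∀ x, |q x| ≤ M)
    (ha_pos : ∃ m > 0, ∀ x, m ≤ a x) (hψ : AdmissibleOn R ψ) (hφ : AdmissibleOn R φ)
    (hsub : ∀ x ∈ Ioi R, μ * ψ x ≤ Lop a q c ψ x)
    (hsup : ∀ x ∈ Ioi R, Lop a q c φ x ≤ lam * φ x) :
    μ ≤ lam := by
  by_contra! hlt
  obtain ⟨A, hA⟩ := ha_bdd
  obtain ⟨Q, hQ⟩ := hq_bdd
  obtain ⟨m, hm, ham⟩ := ha_pos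
  obtain ⟨Mψ, hMψ⟩ := hψ.2.2.2.1
  obtain ⟨Mφ, hMφ⟩ := hφ.2.2.2.1
  have ha : ∀ x, 0 < a x := fun x => hm.trans_le (ham x)
  have haA : ∀ x, a x ≤ A := fun x => (le_abs_self _).trans (hA x)
  set β := fun x => a x * (logDeriv ψ x + logDeriv φ x) + q x
  set B := A * (Mψ + Mφ) + Q
  have hβ : ∀ x ∈ Ioi R, |β x| ≤ B := fun x hx => calc
    |β x| ≤ |a x| * (|logDeriv ψ x| + |logDeriv φ x|) + |q x| := by
      refine (abs_add_le _ _).trans (add_le_add_left ?_ _)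
      rw [abs_mul]
      exact mul_le_mul_of_nonneg_left (abs_add_le _ _) (abs_nonneg _)
    _ ≤ B := add_le_add (mul_le_mul (hA x) (add_le_add (hMψ x hx) (hMφ x hx))
        (by positivity) ((abs_nonneg _).trans (hA x))) (hQ x)
  have hB : 0 ≤ B := (abs_nonneg _).trans (hβ (R + 1) (by simp))
  have hriccati : ∀ x ∈ Ioi R, μ - lam ≤ a x * (deriv (logDeriv ψ) x - deriv (logDeriv φ) x)
      + β x * (logDeriv ψ x - logDeriv φ x) := by
    intro x hx
    have hψx : μ ≤ Lop a q c ψ x / ψ x := (le_div_iff₀ (hψ.pos hx)).mpr (hsub x hx)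
    have hφx : Lop a q c φ x / φ x ≤ lam := (div_le_iff₀ (hφ.pos hx)).mpr (hsup x hx)
    rw [Lop_div_eq (hψ.differentiableAt hx) (hψ.differentiableAt_deriv hx) (hψ.pos hx).ne']
      at hψx
    rw [Lop_div_eq (hφ.differentiableAt hx) (hφ.differentiableAt_deriv hx) (hφ.pos hx).ne']
      at hφx
    linear_combination hψx + hφx
  exact not_tendsto_div_of_deriv_ge_where_abs_lt (δ := (μ - lam) / (2 * (B + 1)))
    (c₀ := (μ - lam) / (2 * A)) (v := fun x => log (ψ x) - log (φ x))
    (by have := sub_pos.mpr hlt; positivity)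
    (div_pos (sub_pos.mpr hlt) (by linarith [ha 0, haA 0]))
    (fun x hx => (hψ.hasDerivAt_log hx).sub (hφ.hasDerivAt_log hx))
    (fun x hx => (hψ.hasDerivAt_logDeriv hx).sub (hφ.hasDerivAt_logDeriv hx))
    (fun x hx hsx => div_le_of_le_mul_add_mul_of_abs_lt (ha x) (haA x)
      ((hβ x hx).trans (le_add_of_nonneg_right zero_le_one)) (hriccati x hx) hsx)
    (by simpa only [sub_div, sub_zero] using hψ.2.2.2.2.sub hφ.2.2.2.2)

theorem eigenvalue_eq_generalized_principal_eigenvalues_general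
    (a q c : ℝ → ℝ)
    (ha_bdd : ∃ M, ∀ x, |a x| ≤ M) (hq_bdd : ∃ M, ∀ x, |q x| ≤ M)
    (ha_pos : ∃ m > 0, ∀ x, m ≤ a x)
    (lam : ℝ) :
    (∀ R : ℝ,
      (∃ φ, AdmissibleOn R φ ∧ ∀ x ∈ Set.Ioi R, Lop a q c φ x = lam * φ x) →
        lamLower a q c R = lam ∧ lamUpper a q c R = lam) ∧
    ((∃ φ, AdmissibleAll φ ∧ ∀ x : ℝ, Lop a q c φ x = lam * φ x) →
        lamLowerAll a q c = lam ∧ lamUpperAll a q c = lam) := by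
  have compare {R : ℝ} {ψ φ : ℝ → ℝ} {μ ν : ℝ} :=
    le_of_subsolution_of_supersolution (R := R) (ψ := ψ) (φ := φ) (μ := μ) (lam := ν) (c := c)
      ha_bdd hq_bdd ha_pos
  refine ⟨fun R ⟨φ, hφ, heq⟩ => ⟨?_, ?_⟩, fun ⟨φ, hφ, heq⟩ => ⟨?_, ?_⟩⟩
  · exact IsGreatest.csSup_eq ⟨⟨φ, hφ, fun x hx => (heq x hx).ge⟩,
      fun μ ⟨ψ, hψ, hsub⟩ => compare hψ hφ hsub fun x hx => (heq x hx).le⟩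
  · exact IsLeast.csInf_eq ⟨⟨φ, hφ, fun x hx => (heq x hx).le⟩,
      fun ν ⟨ψ, hψ, hsup⟩ => compare hφ hψ (fun x hx => (heq x hx).ge) hsup⟩
  · exact IsGreatest.csSup_eq ⟨⟨φ, hφ, fun x => (heq x).ge⟩,
      fun μ ⟨ψ, hψ, hsub⟩ => compare (hψ.admissibleOn 0) (hφ.admissibleOn 0)
        (fun x _ => hsub x) fun x _ => (heq x).le⟩
  · exact IsLeast.csInf_eq ⟨⟨φ, hφ, fun x => (heq x).le⟩,
      fun ν ⟨ψ, hψ, hsup⟩ => compare (hφ.admissibleOn 0) (hψ.admissibleOn 0)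
        (fun x _ => (heq x).ge) fun x _ => hsup x⟩

/-- Proposition 2.2. If there exist `λ ∈ ℝ`, `R ∈ {-∞} ∪ ℝ` and an
admissible `φ ∈ A_R` with `Lφ = λφ` on `(R,∞)`, then
`λ = λ̲₁(L,(R,∞)) = λ̄₁(L,(R,∞))`. -/
theorem eigenvalue_eq_generalized_principal_eigenvalues
    (a q c : ℝ → ℝ)
    (ha_cont : Continuous a) (hq_cont : Continuous q) (hc_cont : Continuous c)
    (ha_bdd : ∃ M, ∀ x, |a x| ≤ M) (hq_bdd : ∃ M, ∀ x, |q x| ≤ M)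
    (hc_bdd : ∃ M, ∀ x, |c x| ≤ M)
    (ha_pos : ∃ m > 0, ∀ x, m ≤ a x)
    (lam : ℝ) :
    (∀ R : ℝ,
      (∃ φ, AdmissibleOn R φ ∧ ∀ x ∈ Set.Ioi R, Lop a q c φ x = lam * φ x) →
        lamLower a q c R = lam ∧ lamUpper a q c R = lam) ∧
    ((∃ φ, AdmissibleAll φ ∧ ∀ x : ℝ, Lop a q c φ x = lam * φ x) →
        lamLowerAll a q c = lam ∧ lamUpperAll a q c = lam) :=
  eigenvalue_eq_generalized_principal_eigenvalues_general a q c ha_bdd hq_bdd ha_pos lam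
end

section
/- Assume the standing hypotheses on a, q, f. Let u₀ : ℝ → ℝ be measurable and compactly supported with 0 ≤ u₀ ≤ 1 and u₀ ≢ 0, and let u be a classical solution of the Cauchy problem ∂_t u = a(x)∂_xx u + q(x)∂_x u + f(x,u) on (0,∞)×ℝ with u(0,·) = u₀ and 0 ≤ u ≤ 1. Then for every w > w̄, lim_{t→+∞} sup_{x ≥ wt} |u(t,x)| = 0. -/
open Real Filter Set

/-- Standing hypotheses on the coefficients `a`, `q` and the nonlinearity `f`
(`fs x s` denotes the partial derivative `f_s'(x,s)`). -/
def StandingHyp (a q : ℝ → ℝ) (f fs : ℝ → ℝ → ℝ) (γ : ℝ) : Prop :=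
  (0 < γ ∧ γ < 1) ∧
  (UniformContinuous a ∧ ∃ M, ∀ x, |a x| ≤ M) ∧
  (UniformContinuous q ∧ ∃ M, ∀ x, |q x| ≤ M) ∧
  (∃ m > 0, ∀ x, m ≤ a x) ∧
  (∀ ε > 0, ∃ δ > 0, ∀ x y : ℝ, |x - y| < δ → ∀ s ∈ Set.Icc (0:ℝ) 1, |f x s - f y s| < ε) ∧
  (∃ M, ∀ x : ℝ, ∀ s ∈ Set.Icc (0:ℝ) 1, |f x s| ≤ M) ∧
  (∀ x : ℝ, ∀ s ∈ Set.Icc (0:ℝ) 1, HasDerivAt (f x) (fs x s) s) ∧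
  (∃ C, ∀ x : ℝ, ∀ s ∈ Set.Icc (0:ℝ) 1, ∀ t ∈ Set.Icc (0:ℝ) 1,
      |fs x s - fs x t| ≤ C * |s - t| ^ γ) ∧
  (∀ x : ℝ, f x 0 = 0 ∧ f x 1 = 0) ∧
  (∀ s ∈ Set.Ioo (0:ℝ) 1, ∃ m > 0, ∀ x : ℝ, m ≤ f x s) ∧
  (∀ x : ℝ, ∀ s ∈ Set.Icc (0:ℝ) 1, f x s ≤ fs x 0 * s) ∧
  (∃ m > 0, ∃ R : ℝ, ∀ x : ℝ, R ≤ |x| → m ≤ 4 * fs x 0 * a x - q x ^ 2)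

/-- A classical solution of `∂_t u = a ∂_xx u + q ∂_x u + f(x,u)` on `(0,∞) × ℝ`,
continuous on `[0,∞) × ℝ`, `C¹` in `t` and `C²` in `x` on `(0,∞) × ℝ`. -/
def ClassicalSolution (a q : ℝ → ℝ) (f : ℝ → ℝ → ℝ) (u ut ux uxx : ℝ → ℝ → ℝ) : Prop :=
  ContinuousOn (fun pr : ℝ × ℝ => u pr.1 pr.2) (Set.Ici 0 ×ˢ Set.univ) ∧
  (∀ t > (0:ℝ), ∀ x : ℝ,
    HasDerivAt (fun τ => u τ x) (ut t x) t ∧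
    HasDerivAt (fun y => u t y) (ux t x) x ∧
    HasDerivAt (fun y => ux t y) (uxx t x) x ∧
    ut t x = a x * uxx t x + q x * ux t x + f x (u t x)) ∧
  ContinuousOn (fun pr : ℝ × ℝ => ut pr.1 pr.2) (Set.Ioi 0 ×ˢ Set.univ) ∧
  ContinuousOn (fun pr : ℝ × ℝ => ux pr.1 pr.2) (Set.Ioi 0 ×ˢ Set.univ) ∧
  ContinuousOn (fun pr : ℝ × ℝ => uxx pr.1 pr.2) (Set.Ioi 0 ×ˢ Set.univ)

/-!
Compare `u` with a travelling supersolution of the linearized problem. Take `p > 0` with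
`H̄(-p) < w p` and then `R` so large that `λ̄₁(L₋ₚ, (R, ∞)) < w p`, which provides `λ < w p` and
`φ ∈ A_R` with `L₋ₚ φ ≤ λ φ`. Since `L (e^{-p x} φ) = e^{-p x} L₋ₚ φ` and `f(x, s) ≤ f_s'(x, 0) s`,
`e^{λ t - p x} φ(x)`, normalized to `e^{λ t}` at `x = R`, is a supersolution on `(R, ∞)`; it
dominates `u` at `t = 0` (where `u₀` vanishes beyond `R`) and at `x = R` (where `u ≤ 1 ≤ e^{λ t}`,
because `λ > 0` by the condition `4 f_s'(·, 0) a - q² > 0` at infinity). The parabolic minimum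
principle then bounds `u`, and since `φ` is subexponential the bound tends to `0` uniformly on
`x ≥ w t`.
-/

open Topology

lemma IsMinOn.hasDerivAt_nonpos_of_Icc {f : ℝ → ℝ} {d s t : ℝ} (hst : s < t)
    (hmin : IsMinOn f (Icc s t) t) (hd : HasDerivAt f d t) : d ≤ 0 := by
  have hcone : s - t ∈ posTangentConeAt (Icc s t) t :=
    sub_mem_posTangentConeAt_of_segment_subset (by rw [segment_symm, segment_eq_Icc hst.le])
  have h := hmin.localize.hasFDerivWithinAt_nonneg hd.hasFDerivAt.hasFDerivWithinAt hcone
  rw [ContinuousLinearMap.toSpanSingleton_apply, smul_eq_mul] at h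
  nlinarith

lemma IsLocalMin.nonneg_of_hasDerivAt_of_hasDerivAt {g g' : ℝ → ℝ} {d x₀ : ℝ}
    (hmin : IsLocalMin g x₀) (hg : ∀ᶠ x in 𝓝 x₀, HasDerivAt g (g' x) x)
    (hg' : HasDerivAt g' d x₀) : 0 ≤ d := by
  by_contra! hd
  have hzero : g' x₀ = 0 := hmin.hasDerivAt_eq_zero hg.self_of_nhds
  have hneg : ∀ᶠ x in 𝓝[>] x₀, g' x < 0 := by
    have hslope := (hasDerivAt_iff_tendsto_slope.mp hg').mono_left (nhdsGT_le_nhdsNE x₀)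
    filter_upwards [hslope.eventually_lt_const hd, self_mem_nhdsWithin] with x hx hx₀
    rw [slope_def_field, hzero, sub_zero] at hx
    exact neg_of_div_neg_left hx (sub_pos.mpr hx₀).le
  obtain ⟨v, hv, hsub⟩ := mem_nhdsGT_iff_exists_Ioo_subset.mp
    (hneg.and (nhdsWithin_le_nhds (hmin.and hg)))
  replace hv : x₀ < v := hv
  have hx₁ : x₀ < (x₀ + v) / 2 := by linarith
  have hIoo : Ioo x₀ ((x₀ + v) / 2) ⊆ Ioo x₀ v := Ioo_subset_Ioo_right (by linarith)
  have hderiv : ∀ y ∈ Icc x₀ ((x₀ + v) / 2), HasDerivAt g (g' y) y := by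
    intro y hy
    rcases hy.1.eq_or_lt with rfl | hy₀
    · exact hg.self_of_nhds
    · exact (hsub ⟨hy₀, hy.2.trans_lt (by linarith)⟩).2.2
  obtain ⟨ξ, hξ, hξeq⟩ := exists_hasDerivAt_eq_slope g g' hx₁
    (fun y hy => (hderiv y hy).continuousAt.continuousWithinAt)
    (fun y hy => hderiv y (Ioo_subset_Icc_self hy))
  have hξneg : g' ξ < 0 := (hsub (hIoo hξ)).1
  have hmin₁ : g x₀ ≤ g ((x₀ + v) / 2) := (hsub ⟨hx₁, by linarith⟩).2.1
  rw [hξeq] at hξneg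
  have := neg_of_div_neg_left hξneg (by linarith)
  linarith

lemma ContDiffOn.hasDerivAt_deriv_of_isOpen {φ : ℝ → ℝ} {s : Set ℝ} {x : ℝ}
    (h : ContDiffOn ℝ 2 φ s) (hs : IsOpen s) (hx : x ∈ s) :
    HasDerivAt φ (deriv φ x) x ∧ HasDerivAt (deriv φ) (deriv (deriv φ) x) x := by
  have h' : ContDiffOn ℝ 1 (deriv φ) s := h.deriv_of_isOpen hs (by norm_num)
  exact ⟨((h.differentiableOn (by norm_num)).differentiableAt (hs.mem_nhds hx)).hasDerivAt,
    ((h'.differentiableOn (by norm_num)).differentiableAt (hs.mem_nhds hx)).hasDerivAt⟩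

lemma not_bounded_of_hasDerivAt_le_neg {g g' : ℝ → ℝ} {R δ : ℝ} (hδ : 0 < δ)
    (hg : ∀ x ∈ Ioi R, HasDerivAt g (g' x) x) (hg' : ∀ x ∈ Ioi R, g' x ≤ -δ) :
    ¬ ∃ M, ∀ x ∈ Ioi R, |g x| ≤ M := by
  rintro ⟨M, hM⟩
  have hM₀ : 0 ≤ M := (abs_nonneg _).trans (hM (R + 1) (by simp))
  have hlt : R + 1 < R + 1 + (2 * M + 1) / δ := lt_add_of_pos_right _ (by positivity)
  have hIcc : Icc (R + 1) (R + 1 + (2 * M + 1) / δ) ⊆ Ioi R := fun y hy => by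
    simp only [mem_Ioi]; linarith [hy.1]
  obtain ⟨ξ, hξ, hξeq⟩ := exists_hasDerivAt_eq_slope g g' hlt
    (fun y hy => (hg y (hIcc hy)).continuousAt.continuousWithinAt)
    (fun y hy => hg y (hIcc (Ioo_subset_Icc_self hy)))
  have hslope := hg' ξ (hIcc (Ioo_subset_Icc_self hξ))
  rw [hξeq, add_sub_cancel_left, div_le_iff₀ (by positivity), neg_mul,
    mul_div_cancel₀ _ hδ.ne'] at hslope
  linarith [(abs_le.mp (hM _ (hIcc (right_mem_Icc.mpr hlt.le)))).1,
    (abs_le.mp (hM _ (hIcc (left_mem_Icc.mpr hlt.le)))).2]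

/-- Were `λ ≤ 0`, the Riccati variable `φ'/φ` would decrease at a uniform rate, contradicting
its boundedness. -/
lemma pos_of_Lop_le_mul {a b c φ : ℝ → ℝ} {R A m lam : ℝ} (hm : 0 < m)
    (ha : ∀ x ∈ Ioi R, 0 < a x) (haA : ∀ x ∈ Ioi R, a x ≤ A)
    (hdisc : ∀ x ∈ Ioi R, m ≤ 4 * a x * c x - b x ^ 2) (hφ : AdmissibleOn R φ)
    (hL : ∀ x ∈ Ioi R, Lop a b c φ x ≤ lam * φ x) : 0 < lam := by
  by_contra! hlam
  obtain ⟨-, hφ2, hφpos, hbdd, -⟩ := hφ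
  have hder := fun x (hx : x ∈ Ioi R) => hφ2.hasDerivAt_deriv_of_isOpen isOpen_Ioi hx
  have hA : 0 < A := by
    have hR1 : R + 1 ∈ Ioi R := by simp
    exact (ha _ hR1).trans_le (haA _ hR1)
  refine not_bounded_of_hasDerivAt_le_neg (g := fun x => deriv φ x / φ x)
    (g' := fun x => (deriv (deriv φ) x * φ x - deriv φ x * deriv φ x) / φ x ^ 2)
    (δ := m / (4 * A ^ 2)) (by positivity)
    (fun x hx => (hder x hx).2.div (hder x hx).1 (hφpos x (Ioi_subset_Ici_self hx)).ne') ?_ hbdd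
  intro x hx
  have hφx := hφpos x (Ioi_subset_Ici_self hx)
  have hax := ha x hx
  have hLx : a x * deriv (deriv φ) x + b x * deriv φ x + c x * φ x ≤ 0 :=
    (hL x hx).trans (mul_nonpos_of_nonpos_of_nonneg hlam hφx.le)
  have key : 4 * a x ^ 2 * (deriv (deriv φ) x * φ x - deriv φ x * deriv φ x) ≤ -(m * φ x ^ 2) := by
    nlinarith [sq_nonneg (2 * a x * deriv φ x + b x * φ x),
      mul_le_mul_of_nonneg_left hLx (by positivity : (0:ℝ) ≤ 4 * a x * φ x),
      mul_le_mul_of_nonneg_right (hdisc x hx) (sq_nonneg (φ x))]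
  have hax2 : a x ^ 2 ≤ A ^ 2 := pow_le_pow_left₀ hax.le (haA x hx) 2
  rw [div_le_iff₀ (by positivity), neg_mul, div_mul_eq_mul_div, le_neg,
    div_le_iff₀ (by positivity)]
  have hD : deriv (deriv φ) x * φ x - deriv φ x * deriv φ x ≤ 0 := by
    by_contra! hD
    nlinarith [mul_pos (by positivity : (0:ℝ) < 4 * a x ^ 2) hD, mul_pos hm (pow_pos hφx 2)]
  nlinarith [mul_le_mul_of_nonneg_left hax2 (neg_nonneg.mpr hD)]

def IsSupersolutionAt (a b c : ℝ → ℝ) (W Wt Wx Wxx : ℝ → ℝ → ℝ) (t x : ℝ) : Prop :=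
  HasDerivAt (fun τ => W τ x) (Wt t x) t ∧ HasDerivAt (W t) (Wx t x) x ∧
    HasDerivAt (Wx t) (Wxx t x) x ∧ a x * Wxx t x + b x * Wx t x + c x * W t x ≤ Wt t x

namespace IsSupersolutionAt

variable {a b c : ℝ → ℝ} {W Wt Wx Wxx V Vt Vx Vxx : ℝ → ℝ → ℝ} {t x : ℝ}

lemma add (hW : IsSupersolutionAt a b c W Wt Wx Wxx t x)
    (hV : IsSupersolutionAt a b c V Vt Vx Vxx t x) :
    IsSupersolutionAt a b c (W + V) (Wt + Vt) (Wx + Vx) (Wxx + Vxx) t x := by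
  obtain ⟨hWt, hWx, hWxx, hW⟩ := hW
  obtain ⟨hVt, hVx, hVxx, hV⟩ := hV
  refine ⟨hWt.add hVt, hWx.add hVx, hWxx.add hVxx, ?_⟩
  simp only [Pi.add_apply]
  linarith

lemma exp_mul (k : ℝ) (hW : IsSupersolutionAt a b c W Wt Wx Wxx t x) :
    IsSupersolutionAt a b (fun y => c y - k) (fun τ y => exp (-k * τ) * W τ y)
      (fun τ y => exp (-k * τ) * (Wt τ y - k * W τ y)) (fun τ y => exp (-k * τ) * Wx τ y)
      (fun τ y => exp (-k * τ) * Wxx τ y) t x := by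
  obtain ⟨hWt, hWx, hWxx, hW⟩ := hW
  have hexp : HasDerivAt (fun τ => exp (-k * τ)) (exp (-k * t) * (-k * 1)) t :=
    ((hasDerivAt_id t).const_mul (-k)).exp
  refine ⟨(hexp.mul hWt).congr_deriv (by ring), hWx.const_mul _, hWxx.const_mul _, ?_⟩
  have := mul_le_mul_of_nonneg_left hW (exp_pos (-k * t)).le
  linarith

end IsSupersolutionAt

lemma isSupersolutionAt_exp_barrier {a b c : ℝ → ℝ} {η μ t x : ℝ} (hη : 0 ≤ η)
    (habc : a x + b x + c x ≤ μ) :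
    IsSupersolutionAt a b c (fun τ y => η * exp (μ * τ + y)) (fun τ y => μ * (η * exp (μ * τ + y)))
      (fun τ y => η * exp (μ * τ + y)) (fun τ y => η * exp (μ * τ + y)) t x := by
  have hτ : HasDerivAt (fun τ => μ * τ + x) μ t := ((hasDerivAt_id t).const_mul μ).add_const x
    |>.congr_deriv (mul_one μ)
  have hy : HasDerivAt (fun y => μ * t + y) 1 x := (hasDerivAt_id x).const_add _
  refine ⟨(hτ.exp.const_mul η).congr_deriv (by ring), (hy.exp.const_mul η).congr_deriv (by ring),
    (hy.exp.const_mul η).congr_deriv (by ring), ?_⟩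
  have := mul_le_mul_of_nonneg_right habc (by positivity : 0 ≤ η * exp (μ * t + x))
  linarith

/-- A negative minimum of a supersolution with `c < 0` cannot lie off the parabolic boundary. -/
theorem nonneg_of_isSupersolutionAt_Icc {a b c : ℝ → ℝ} {W Wt Wx Wxx : ℝ → ℝ → ℝ} {T R X : ℝ}
    (ha : ∀ x ∈ Ioo R X, 0 ≤ a x) (hc : ∀ x ∈ Ioo R X, c x < 0)
    (hcont : ContinuousOn (fun p : ℝ × ℝ => W p.1 p.2) (Icc 0 T ×ˢ Icc R X))
    (hW : ∀ t ∈ Ioc 0 T, ∀ x ∈ Ioo R X, IsSupersolutionAt a b c W Wt Wx Wxx t x)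
    (h0 : ∀ x ∈ Icc R X, 0 ≤ W 0 x) (hR : ∀ t ∈ Icc 0 T, 0 ≤ W t R)
    (hX : ∀ t ∈ Icc 0 T, 0 ≤ W t X) :
    ∀ t ∈ Icc 0 T, ∀ x ∈ Icc R X, 0 ≤ W t x := by
  intro t ht x hx
  obtain ⟨⟨t₀, x₀⟩, ⟨ht₀, hx₀⟩, hmin⟩ :=
    (isCompact_Icc.prod isCompact_Icc).exists_isMinOn ⟨(t, x), ht, hx⟩ hcont
  have hmin' : ∀ t ∈ Icc 0 T, ∀ x ∈ Icc R X, W t₀ x₀ ≤ W t x := fun t ht x hx =>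
    isMinOn_iff.mp hmin (t, x) ⟨ht, hx⟩
  refine le_trans ?_ (hmin' t ht x hx)
  by_contra! hneg
  have ht₀' : t₀ ∈ Ioc 0 T :=
    ⟨ht₀.1.lt_of_ne (by rintro rfl; linarith [h0 x₀ hx₀]), ht₀.2⟩
  have hx₀' : x₀ ∈ Ioo R X :=
    ⟨hx₀.1.lt_of_ne (by rintro rfl; linarith [hR t₀ ht₀]),
      hx₀.2.lt_of_ne (by rintro rfl; linarith [hX t₀ ht₀])⟩
  obtain ⟨hWt, hWx, hWxx, hineq⟩ := hW t₀ ht₀' x₀ hx₀'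
  have hmin_t : IsMinOn (fun τ => W τ x₀) (Icc 0 t₀) t₀ :=
    isMinOn_iff.mpr fun τ hτ => hmin' τ ⟨hτ.1, hτ.2.trans ht₀.2⟩ x₀ hx₀
  have hmin_x : IsLocalMin (W t₀) x₀ :=
    Filter.mem_of_superset (Icc_mem_nhds hx₀'.1 hx₀'.2) fun y hy => hmin' t₀ ht₀ y hy
  have hWt_nonpos : Wt t₀ x₀ ≤ 0 := hmin_t.hasDerivAt_nonpos_of_Icc ht₀'.1 hWt
  have hWx_zero : Wx t₀ x₀ = 0 := hmin_x.hasDerivAt_eq_zero hWx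
  have hWxx_nonneg : 0 ≤ Wxx t₀ x₀ :=
    hmin_x.nonneg_of_hasDerivAt_of_hasDerivAt (Filter.mem_of_superset (Ioo_mem_nhds hx₀'.1 hx₀'.2)
      fun y hy => (hW t₀ ht₀' y hy).2.1) hWxx
  rw [hWx_zero] at hineq
  nlinarith [mul_nonneg (ha x₀ hx₀') hWxx_nonneg, mul_pos_of_neg_of_neg (hc x₀ hx₀') hneg]

lemma nonneg_of_forall_pos_nonneg_add_mul {a b : ℝ} (h : ∀ η > 0, 0 ≤ a + η * b) : 0 ≤ a := by
  have hlim : Tendsto (fun η => a + η * b) (𝓝[>] 0) (𝓝 a) := by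
    have hcont : Continuous fun η => a + η * b := by fun_prop
    simpa using (hcont.tendsto 0).mono_left nhdsWithin_le_nhds
  exact ge_of_tendsto hlim (eventually_nhdsWithin_of_forall h)

/-- The exponential weight `e^{-kt}` makes the zeroth-order coefficient negative, and the barrier
`η e^{μt + x}` dominates the lower bound `-M` at the far end `x = X` of a large rectangle. -/
theorem nonneg_of_isSupersolutionAt_Ici {a b c : ℝ → ℝ} {z zt zx zxx : ℝ → ℝ → ℝ} {R A K M : ℝ}
    (ha : ∀ x ∈ Ioi R, 0 ≤ a x) (hab : ∀ x ∈ Ioi R, a x + b x ≤ A)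
    (hc : ∀ x ∈ Ioi R, c x ≤ K)
    (hcont : ContinuousOn (fun p : ℝ × ℝ => z p.1 p.2) (Ici 0 ×ˢ Ici R))
    (hz : ∀ t > 0, ∀ x ∈ Ioi R, IsSupersolutionAt a b c z zt zx zxx t x)
    (hlow : ∀ t ≥ 0, ∀ x ≥ R, -M ≤ z t x)
    (h0 : ∀ x ≥ R, 0 ≤ z 0 x) (hR : ∀ t ≥ 0, 0 ≤ z t R) :
    ∀ t ≥ 0, ∀ x ≥ R, 0 ≤ z t x := by
  intro T hT xs hxs
  set k := max K 0 + 1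
  set μ := max A 0
  have hweight : ∀ t ≥ 0, 0 < exp (-k * t) ∧ exp (-k * t) ≤ 1 := fun t ht =>
    ⟨exp_pos _, exp_le_one_iff.mpr (by nlinarith [le_max_right K 0])⟩
  have key : ∀ η > 0, 0 ≤ exp (-k * T) * z T xs + η * exp (μ * T + xs) := by
    intro η hη
    set X := max xs (max M 0 / η)
    have hsuper : ∀ t ∈ Ioc 0 T, ∀ x ∈ Ioo R X, IsSupersolutionAt a b (fun y => c y - k)
        ((fun τ y => exp (-k * τ) * z τ y) + fun τ y => η * exp (μ * τ + y))
        ((fun τ y => exp (-k * τ) * (zt τ y - k * z τ y)) + fun τ y => μ * (η * exp (μ * τ + y)))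
        ((fun τ y => exp (-k * τ) * zx τ y) + fun τ y => η * exp (μ * τ + y))
        ((fun τ y => exp (-k * τ) * zxx τ y) + fun τ y => η * exp (μ * τ + y)) t x :=
      fun t ht x hx => ((hz t ht.1 x hx.1).exp_mul k).add (isSupersolutionAt_exp_barrier hη.le
        (by linarith [hab x hx.1, hc x hx.1, le_max_left A 0, le_max_left K 0]))
    have hcontW : ContinuousOn (fun p : ℝ × ℝ => exp (-k * p.1) * z p.1 p.2
        + η * exp (μ * p.1 + p.2)) (Icc 0 T ×ˢ Icc R X) :=
      ((Continuous.continuousOn (by fun_prop)).mul (hcont.mono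
        (prod_mono Icc_subset_Ici_self Icc_subset_Ici_self))).add
        (Continuous.continuousOn (by fun_prop))
    have hbarrier : ∀ t ≥ 0, ∀ x, 0 < η * exp (μ * t + x) := fun _ _ _ => by positivity
    have hfar : ∀ t ∈ Icc 0 T, 0 ≤ exp (-k * t) * z t X + η * exp (μ * t + X) := by
      intro t ht
      obtain ⟨hw₀, hw₁⟩ := hweight t ht.1
      have hzX : -max M 0 ≤ exp (-k * t) * z t X := by
        nlinarith [hlow t ht.1 X (hxs.trans (le_max_left _ _)), le_max_left M 0, le_max_right M 0]
      have hηX : max M 0 ≤ η * X := by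
        rw [mul_comm, ← div_le_iff₀ hη]; exact le_max_right _ _
      have hexp : X + 1 ≤ exp (μ * t + X) := (add_one_le_exp X).trans
        (exp_le_exp.mpr (by nlinarith [le_max_right A 0, ht.1]))
      nlinarith
    have hW := nonneg_of_isSupersolutionAt_Icc (fun x hx => ha x hx.1)
      (fun x hx => by linarith [hc x hx.1, le_max_left K 0]) hcontW hsuper
      (fun x hx => by simpa using add_nonneg (h0 x hx.1) (hbarrier 0 le_rfl x).le)
      (fun t ht => add_nonneg (mul_nonneg (hweight t ht.1).1.le (hR t ht.1))
        (hbarrier t ht.1 R).le) hfar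
    exact hW T ⟨hT, le_rfl⟩ xs ⟨hxs, le_max_left _ _⟩
  exact (mul_nonneg_iff_of_pos_left (hweight T hT).1).mp (nonneg_of_forall_pos_nonneg_add_mul key)

lemma ClassicalSolution.isSupersolutionAt_neg {a q c : ℝ → ℝ} {f : ℝ → ℝ → ℝ}
    {u ut ux uxx : ℝ → ℝ → ℝ} {t x : ℝ} (hsol : ClassicalSolution a q f u ut ux uxx)
    (ht : 0 < t) (hfc : f x (u t x) ≤ c x * u t x) :
    IsSupersolutionAt a q c (-u) (-ut) (-ux) (-uxx) t x := by
  obtain ⟨hut, hux, huxx, heq⟩ := hsol.2.1 t ht x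
  refine ⟨hut.neg, hux.neg, huxx.neg, ?_⟩
  simp only [Pi.neg_apply]
  linarith

/-- `L (e^{-p x} φ) = e^{-p x} L₋ₚ φ`. -/
lemma isSupersolutionAt_exp_mul_of_Lop_le {a q c φ : ℝ → ℝ} {C p lam t x : ℝ} (hC : 0 ≤ C)
    (hφ : HasDerivAt φ (deriv φ x) x) (hφ' : HasDerivAt (deriv φ) (deriv (deriv φ) x) x)
    (hL : Lop a (fun y => 2 * -p * a y + q y) (fun y => a y * (-p) ^ 2 + q y * -p + c y) φ x
      ≤ lam * φ x) :
    IsSupersolutionAt a q c (fun τ y => C * exp (lam * τ - p * y) * φ y)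
      (fun τ y => lam * (C * exp (lam * τ - p * y) * φ y))
      (fun τ y => C * exp (lam * τ - p * y) * (deriv φ y - p * φ y))
      (fun τ y => C * exp (lam * τ - p * y) * (deriv (deriv φ) y - 2 * p * deriv φ y + p ^ 2 * φ y))
      t x := by
  have hτ : HasDerivAt (fun τ => lam * τ - p * x) lam t :=
    ((hasDerivAt_id t).const_mul lam).sub_const _ |>.congr_deriv (mul_one lam)
  have hy : HasDerivAt (fun y => lam * t - p * y) (-p) x :=
    ((hasDerivAt_id x).const_mul p).const_sub _ |>.congr_deriv (by ring)
  refine ⟨((hτ.exp.const_mul C).mul_const (φ x)).congr_deriv (by ring),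
    ((hy.exp.const_mul C).mul hφ).congr_deriv (by ring),
    ((hy.exp.const_mul C).mul (hφ'.sub (hφ.const_mul p))).congr_deriv
      (by simp only [Pi.sub_apply]; ring), ?_⟩
  have h := mul_le_mul_of_nonneg_left hL (by positivity : 0 ≤ C * exp (lam * t - p * x))
  simp only [Lop] at h
  linarith

lemma ClassicalSolution.le_exp_mul_of_Lop_le {a q c φ : ℝ → ℝ} {f : ℝ → ℝ → ℝ}
    {u ut ux uxx : ℝ → ℝ → ℝ} {R A K p lam : ℝ} (hsol : ClassicalSolution a q f u ut ux uxx)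
    (hu01 : ∀ t ≥ (0:ℝ), ∀ x, u t x ∈ Icc (0:ℝ) 1) (hu₀ : ∀ x ≥ R, u 0 x = 0)
    (hfc : ∀ x, ∀ s ∈ Icc (0:ℝ) 1, f x s ≤ c x * s)
    (ha : ∀ x ∈ Ioi R, 0 ≤ a x) (haq : ∀ x ∈ Ioi R, a x + q x ≤ A) (hc : ∀ x ∈ Ioi R, c x ≤ K)
    (hφ : AdmissibleOn R φ)
    (hL : ∀ x ∈ Ioi R, Lop a (fun y => 2 * -p * a y + q y)
      (fun y => a y * (-p) ^ 2 + q y * -p + c y) φ x ≤ lam * φ x) (hlam : 0 ≤ lam) :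
    ∀ t ≥ 0, ∀ x ≥ R, u t x ≤ exp (p * R) / φ R * exp (lam * t - p * x) * φ x := by
  obtain ⟨hφ1, hφ2, hφpos, -, -⟩ := hφ
  have hφR := hφpos R self_mem_Ici
  set C := exp (p * R) / φ R
  have hψ : ∀ t, ∀ x ≥ R, 0 ≤ C * exp (lam * t - p * x) * φ x := fun t x hx =>
    mul_nonneg (by positivity) (hφpos x hx).le
  have hcont : ContinuousOn (fun pr : ℝ × ℝ => C * exp (lam * pr.1 - p * pr.2) * φ pr.2
      + -u pr.1 pr.2) (Ici 0 ×ˢ Ici R) :=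
    ((Continuous.continuousOn (by fun_prop)).mul (hφ1.continuousOn.comp continuous_snd.continuousOn
      fun pr hpr => hpr.2)).add (hsol.1.mono (prod_mono subset_rfl (subset_univ _))).neg
  have hz := nonneg_of_isSupersolutionAt_Ici (M := 1) ha haq hc hcont
    (fun t ht x hx =>
      (isSupersolutionAt_exp_mul_of_Lop_le (by positivity)
        (hφ2.hasDerivAt_deriv_of_isOpen isOpen_Ioi hx).1
        (hφ2.hasDerivAt_deriv_of_isOpen isOpen_Ioi hx).2 (hL x hx)).add
      (hsol.isSupersolutionAt_neg ht (hfc x _ (hu01 t ht.le x))))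
    (fun t ht x hx => by
      simp only [Pi.add_apply, Pi.neg_apply]
      linarith [hψ t x hx, (hu01 t ht x).2])
    (fun x hx => by
      simp only [Pi.add_apply, Pi.neg_apply, hu₀ x hx, neg_zero, add_zero]
      exact hψ 0 x hx)
    (fun t ht => by
      have hR : C * exp (lam * t - p * R) * φ R = exp (lam * t) := by
        simp only [C, div_mul_eq_mul_div, div_mul_cancel₀ _ hφR.ne'] 
        rw [← exp_add]; ring_nf
      simp only [Pi.add_apply, Pi.neg_apply, hR]
      linarith [one_le_exp (mul_nonneg hlam ht), (hu01 t ht R).2])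
  intro t ht x hx
  have := hz t ht x hx
  simp only [Pi.add_apply, Pi.neg_apply] at this
  linarith

lemma eventually_le_exp_of_tendsto_log_div {φ : ℝ → ℝ}
    (hφ : Tendsto (fun x => log (φ x) / x) atTop (𝓝 0)) {η : ℝ} (hη : 0 < η) :
    ∀ᶠ x in atTop, φ x ≤ exp (η * x) := by
  filter_upwards [hφ.eventually (gt_mem_nhds hη), eventually_gt_atTop 0] with x hx hx₀
  rcases le_or_gt (φ x) 0 with hφx | hφx
  · exact hφx.trans (exp_pos _).le
  · rw [← exp_log hφx, exp_le_exp]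
    exact ((div_lt_iff₀ hx₀).mp hx).le

lemma eventually_forall_exp_mul_le {φ : ℝ → ℝ} {C p lam w : ℝ}
    (hφ : Tendsto (fun x => log (φ x) / x) atTop (𝓝 0)) (hC : 0 ≤ C) (hp : 0 < p)
    (hlam : 0 ≤ lam) (hw : lam < w * p) (R : ℝ) {ε : ℝ} (hε : 0 < ε) :
    ∀ᶠ t in atTop, ∀ x, w * t ≤ x → R ≤ x ∧ C * exp (lam * t - p * x) * φ x ≤ ε := by
  have hw₀ : 0 < w := pos_of_mul_pos_left (hlam.trans_lt hw) hp.le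
  set η := (w * p - lam) / (2 * w)
  have hη : 0 < η := div_pos (by linarith) (by linarith)
  have hpη : (p - η) * w = lam + (w * p - lam) / 2 := by
    simp only [η]; field_simp; ring
  have hpη₀ : 0 < p - η := by nlinarith
  obtain ⟨X, hX⟩ := eventually_atTop.mp (eventually_le_exp_of_tendsto_log_div hφ hη)
  have hdecay : Tendsto (fun t => C * exp (-((w * p - lam) / 2 * t))) atTop (𝓝 0) := by
    simpa using (tendsto_exp_neg_atTop_nhds_zero.comp
      (tendsto_id.const_mul_atTop (by linarith : 0 < (w * p - lam) / 2))).const_mul C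
  filter_upwards [hdecay.eventually (ge_mem_nhds hε), eventually_ge_atTop (max X R / w)]
    with t ht hwt x hx
  have hxX : max X R ≤ x := ((div_le_iff₀' hw₀).mp hwt).trans hx
  refine ⟨(le_max_right _ _).trans hxX, le_trans ?_ ht⟩
  calc C * exp (lam * t - p * x) * φ x
      ≤ C * exp (lam * t - p * x) * exp (η * x) := by
        gcongr; exact hX x ((le_max_left _ _).trans hxX)
    _ = C * exp (lam * t - (p - η) * x) := by rw [mul_assoc, ← exp_add]; ring_nf
    _ ≤ C * exp (-((w * p - lam) / 2 * t)) := by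
        gcongr
        have hwt' : (p - η) * (w * t) = (lam + (w * p - lam) / 2) * t := by rw [← hpη]; ring
        linarith [mul_le_mul_of_nonneg_left hx hpη₀.le]

lemma admissibleOn_one (R : ℝ) : AdmissibleOn R fun _ => (1 : ℝ) :=
  ⟨contDiffOn_const, contDiffOn_const, fun _ _ => one_pos, ⟨0, fun _ _ => by simp⟩,
    by simp⟩

/-- The bound on `c` puts the constant `1` among the test functions, so that `lamUpper` is not
the junk value `sInf ∅ = 0`. -/
lemma exists_Lop_le_mul_of_lamUpper_lt {a b c : ℝ → ℝ} {R K μ : ℝ}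
    (hc : ∀ x ∈ Ioi R, c x ≤ K) (h : lamUpper a b c R < μ) :
    ∃ lam < μ, ∃ φ, AdmissibleOn R φ ∧ ∀ x ∈ Ioi R, Lop a b c φ x ≤ lam * φ x := by
  have hne : K ∈ {lam : ℝ | ∃ φ, AdmissibleOn R φ ∧ ∀ x ∈ Ioi R, Lop a b c φ x ≤ lam * φ x} :=
    ⟨_, admissibleOn_one R, fun x hx => by simpa [Lop] using hc x hx⟩
  obtain ⟨lam, hlam, hlt⟩ := exists_lt_of_csInf_lt ⟨K, hne⟩ h
  exact ⟨lam, hlt, hlam⟩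

lemma abs_deriv_zero_le_of_holder {g g' : ℝ → ℝ} {C γ : ℝ} (hγ : 0 ≤ γ)
    (hg : ∀ s ∈ Icc (0:ℝ) 1, HasDerivAt g (g' s) s) (hg01 : g 0 = g 1)
    (hC : ∀ s ∈ Icc (0:ℝ) 1, ∀ t ∈ Icc (0:ℝ) 1, |g' s - g' t| ≤ C * |s - t| ^ γ) :
    |g' 0| ≤ C := by
  have hC₀ : 0 ≤ C := by
    simpa using (abs_nonneg _).trans (hC 0 (by simp) 1 (by simp))
  obtain ⟨ξ, hξ, hξ0⟩ := exists_hasDerivAt_eq_zero zero_lt_one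
    (fun s hs => (hg s hs).continuousAt.continuousWithinAt) hg01
    (fun s hs => hg s (Ioo_subset_Icc_self hs))
  calc |g' 0| = |g' 0 - g' ξ| := by rw [hξ0, sub_zero]
    _ ≤ C * |0 - ξ| ^ γ := hC 0 (by simp) ξ (Ioo_subset_Icc_self hξ)
    _ ≤ C * 1 := by
        gcongr
        exact rpow_le_one (abs_nonneg _) (by rw [zero_sub, abs_neg, abs_of_pos hξ.1]; exact hξ.2.le) hγ
    _ = C := mul_one C

lemma StandingHyp.exists_fs_zero_le {a q : ℝ → ℝ} {f fs : ℝ → ℝ → ℝ} {γ : ℝ}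
    (hst : StandingHyp a q f fs γ) : ∃ K, ∀ x, fs x 0 ≤ K := by
  obtain ⟨⟨hγ, -⟩, -, -, -, -, -, hfd, ⟨H, hH⟩, hf01, -⟩ := hst
  exact ⟨H, fun x => (le_abs_self _).trans
    (abs_deriv_zero_le_of_holder hγ.le (hfd x) ((hf01 x).1.trans (hf01 x).2.symm) (hH x))⟩

theorem spreading_upper_bound_general
    (a q : ℝ → ℝ) (f fs : ℝ → ℝ → ℝ) (γ : ℝ)
    (hst : StandingHyp a q f fs γ)
    (u₀ : ℝ → ℝ) (hu₀_supp : HasCompactSupport u₀)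
    (u ut ux uxx : ℝ → ℝ → ℝ)
    (hsol : ClassicalSolution a q f u ut ux uxx)
    (hinit : ∀ x, u 0 x = u₀ x)
    (hu01 : ∀ t ≥ (0:ℝ), ∀ x : ℝ, u t x ∈ Set.Icc (0:ℝ) 1)
    (Hup : ℝ → ℝ)
    (hHup : ∀ p : ℝ, Filter.Tendsto
      (fun R => lamUpper a (fun x => 2 * p * a x + q x)
        (fun x => a x * p ^ 2 + q x * p + fs x 0) R) Filter.atTop (nhds (Hup p)))
    (w : ℝ) (hw : sInf {v : ℝ | ∃ p > 0, v = Hup (-p) / p} < w) :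
    ∀ ε > 0, ∃ T : ℝ, ∀ t ≥ T, ∀ x : ℝ, w * t ≤ x → |u t x| ≤ ε := by
  obtain ⟨K, hK⟩ := hst.exists_fs_zero_le
  obtain ⟨-, ⟨-, A, hA⟩, ⟨-, B, hB⟩, ⟨m₀, hm₀, ha⟩, -, -, -, -, -, -, hfs, ⟨m, hm, R₁, hdisc⟩⟩ := hst
  replace ha : ∀ x, 0 < a x := fun x => hm₀.trans_le (ha x)
  obtain ⟨_, ⟨p, hp, rfl⟩, hpw⟩ :=
    exists_lt_of_csInf_lt (s := {v : ℝ | ∃ p > 0, v = Hup (-p) / p}) ⟨_, 1, one_pos, rfl⟩ hw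
  obtain ⟨S, -, hS⟩ := hu₀_supp.exists_pos_le_norm
  obtain ⟨R, hR, hRS⟩ := (((hHup (-p)).eventually (gt_mem_nhds ((div_lt_iff₀ hp).mp hpw))).and
    (eventually_ge_atTop (max R₁ S))).exists
  obtain ⟨lam, hlam, φ, hφ, hL⟩ := exists_Lop_le_mul_of_lamUpper_lt (K := A * p ^ 2 + B * p + K)
    (fun x _ => by nlinarith [le_abs_self (a x), neg_abs_le (q x), hA x, hB x, hK x]) hR
  have hlam₀ : 0 < lam := pos_of_Lop_le_mul hm (fun x _ => ha x)
    (fun x _ => (le_abs_self _).trans (hA x)) (fun x hx => by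
      have := hdisc x (((le_max_left _ _).trans hRS).trans (hx.out.le.trans (le_abs_self x)))
      linarith [show 4 * a x * (a x * (-p) ^ 2 + q x * -p + fs x 0) - (2 * -p * a x + q x) ^ 2
        = 4 * fs x 0 * a x - q x ^ 2 by ring]) hφ hL
  have hcomp := hsol.le_exp_mul_of_Lop_le hu01
    (fun x hx => by
      rw [hinit]
      exact hS x (((le_max_right _ _).trans hRS).trans (hx.trans (le_abs_self x))))
    hfs (fun x _ => (ha x).le) (fun x _ => add_le_add ((le_abs_self _).trans (hA x))
      ((le_abs_self _).trans (hB x))) (fun x _ => hK x) hφ hL hlam₀.le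
  intro ε hε
  obtain ⟨T, hT⟩ := eventually_atTop.mp ((eventually_forall_exp_mul_le hφ.2.2.2.2
    (div_nonneg (exp_pos _).le (hφ.2.2.1 R self_mem_Ici).le) hp hlam₀.le hlam R hε).and
    (eventually_ge_atTop 0))
  refine ⟨T, fun t ht x hx => ?_⟩
  obtain ⟨hdecay, ht₀⟩ := hT t ht
  obtain ⟨hxR, hle⟩ := hdecay x hx
  rw [abs_of_nonneg (hu01 t ht₀ x).1]
  exact (hcomp t ht₀ x hxR).trans hle

/-- Theorem 2.4, part 1. For every speed `w > w̄`, where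
`w̄ = inf_{p>0} H̄(-p)/p`, the solution of the Cauchy problem satisfies
`lim_{t→+∞} sup_{x ≥ wt} |u(t,x)| = 0`. -/
theorem spreading_upper_bound
    (a q : ℝ → ℝ) (f fs : ℝ → ℝ → ℝ) (γ : ℝ)
    (hst : StandingHyp a q f fs γ)
    (u₀ : ℝ → ℝ) (hu₀_meas : Measurable u₀) (hu₀_supp : HasCompactSupport u₀)
    (hu₀_01 : ∀ x, u₀ x ∈ Set.Icc (0:ℝ) 1) (hu₀_ne : ∃ x, u₀ x ≠ 0)
    (u ut ux uxx : ℝ → ℝ → ℝ)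
    (hsol : ClassicalSolution a q f u ut ux uxx)
    (hinit : ∀ x, u 0 x = u₀ x)
    (hu01 : ∀ t ≥ (0:ℝ), ∀ x : ℝ, u t x ∈ Set.Icc (0:ℝ) 1)
    (Hup : ℝ → ℝ)
    (hHup : ∀ p : ℝ, Filter.Tendsto
      (fun R => lamUpper a (fun x => 2 * p * a x + q x)
        (fun x => a x * p ^ 2 + q x * p + fs x 0) R) Filter.atTop (nhds (Hup p)))
    (w : ℝ) (hw : sInf {v : ℝ | ∃ p > 0, v = Hup (-p) / p} < w) :
    ∀ ε > 0, ∃ T : ℝ, ∀ t ≥ T, ∀ x : ℝ, w * t ≤ x → |u t x| ≤ ε :=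
  spreading_upper_bound_general a q f fs γ hst u₀ hu₀_supp u ut ux uxx hsol hinit hu01 Hup hHup w hw
end
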